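/- arXiv:1910.13486 — 3 statements merged into one kernel-verified Lean document; each statement's English description precedes it below -/
import Mathlib

section
/- Let g be C¹, F be C², and suppose x(s,t) = s + F'(g(s))t with u(s) = g(s) and differentiable s₁(t), s₂(t) satisfy x(s₁(t),t) = x(s₂(t),t), u(s₁(t)) ≠ u(s₂(t)), and the Rankine–Hugoniot condition d/dt x(s₁(t),t) = d/dt x(s₂(t),t) = (F(u(s₁(t))) - F(u(s₂(t))))/(u(s₁(t)) - u(s₂(t))) on [t*, T]. Then A(t) := ∫_{s₁(t)}^{s₂(t)} u(s) ∂x/∂s(s,t) ds is constant on [t*, T]. -/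
/-!
With `u = g s` and `Φ u = u F'(u) - F(u)`, the integrand `u ∂ₛx = g s (1 + F''(g s) g'(s) t)` has
the `s`-primitive `P(t, s) = ∫₀ˢ g + t Φ(g s)`, so `A(t) = P(t, s₂ t) - P(t, s₁ t)`. Along a curve
`s(t)` whose point `x(s(t), t)` moves with speed `σ`, the chain rule gives
`d/dt P(t, s(t)) = u σ - F(u)`. Under the Rankine–Hugoniot condition both endpoints move with the
chord slope `σ` of `F` between `u₁` and `u₂`, and `u ↦ u σ - F(u)` takes equal values at the two
ends of that chord, so `A' = 0`.
-/

open Set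

noncomputable def areaPotential (F g : ℝ → ℝ) (t s : ℝ) : ℝ :=
  (∫ r in (0 : ℝ)..s, g r) + t * (g s * deriv F (g s) - F (g s))

theorem hasDerivAt_mul_deriv_sub {F : ℝ → ℝ} {u : ℝ} (hF : DifferentiableAt ℝ F u)
    (hF' : DifferentiableAt ℝ (deriv F) u) :
    HasDerivAt (fun v => v * deriv F v - F v) (u * deriv (deriv F) u) u :=
  (((hasDerivAt_id u).mul hF'.hasDerivAt).sub hF.hasDerivAt).congr_deriv (by simp)

theorem mul_slope_sub_eq_mul_slope_sub (F : ℝ → ℝ) (a b : ℝ) :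
    a * ((F a - F b) / (a - b)) - F a = b * ((F a - F b) / (a - b)) - F b := by
  have h := sub_smul_slope F b a
  rw [slope_def_field, smul_eq_mul, vsub_eq_sub] at h
  linear_combination h

section

variable {F g : ℝ → ℝ}

theorem hasDerivAt_areaPotential (hF : Differentiable ℝ F) (hF' : Differentiable ℝ (deriv F))
    (hg : Differentiable ℝ g) (t s : ℝ) :
    HasDerivAt (areaPotential F g t) (g s * (1 + deriv (deriv F) (g s) * deriv g s * t)) s := by
  have hG := (hg.continuous.integral_hasStrictDerivAt 0 s).hasDerivAt
  have hΦ := (hasDerivAt_mul_deriv_sub (hF (g s)) (hF' (g s))).comp s (hg s).hasDerivAt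
  exact (hG.add (hΦ.const_mul t)).congr_deriv (by ring)

theorem integral_eq_areaPotential_sub (hF : ContDiff ℝ 2 F) (hg : ContDiff ℝ 1 g) (t a b : ℝ) :
    ∫ s in a..b, g s * (1 + deriv (deriv F) (g s) * deriv g s * t) =
      areaPotential F g t b - areaPotential F g t a := by
  have hF' : ContDiff ℝ 1 (deriv F) := hF.deriv'
  refine intervalIntegral.integral_eq_sub_of_hasDerivAt (fun s _ => hasDerivAt_areaPotential
    (hF.differentiable two_ne_zero) (hF'.differentiable one_ne_zero)
    (hg.differentiable one_ne_zero) t s) ?_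
  have hF''c := hF'.continuous_deriv le_rfl
  have hg'c := hg.continuous_deriv le_rfl
  have hgc := hg.continuous
  exact Continuous.intervalIntegrable (by fun_prop) a b

variable {s : ℝ → ℝ} {s' t : ℝ} {S : Set ℝ}

theorem hasDerivWithinAt_characteristic (hF' : Differentiable ℝ (deriv F)) (hg : Differentiable ℝ g)
    (hs : HasDerivWithinAt s s' S t) :
    HasDerivWithinAt (fun τ => s τ + deriv F (g (s τ)) * τ)
      (s' * (1 + deriv (deriv F) (g (s t)) * deriv g (s t) * t) + deriv F (g (s t))) S t := by
  have hgs := (hg (s t)).hasDerivAt.comp_hasDerivWithinAt t hs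
  have hF's := (hF' (g (s t))).hasDerivAt.comp_hasDerivWithinAt t hgs
  exact (hs.add (hF's.mul (hasDerivWithinAt_id t S))).congr_deriv
    (by simp only [id_eq, Function.comp_apply, mul_one]; ring)

theorem hasDerivWithinAt_areaPotential_comp (hF : Differentiable ℝ F)
    (hF' : Differentiable ℝ (deriv F)) (hg : Differentiable ℝ g) (hs : HasDerivWithinAt s s' S t) :
    HasDerivWithinAt (fun τ => areaPotential F g τ (s τ))
      (g (s t) * (s' * (1 + deriv (deriv F) (g (s t)) * deriv g (s t) * t) + deriv F (g (s t)))
        - F (g (s t))) S t := by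
  have hG := (hg.continuous.integral_hasStrictDerivAt 0 (s t)).hasDerivAt.comp_hasDerivWithinAt t hs
  have hΦ := ((hasDerivAt_mul_deriv_sub (hF (g (s t))) (hF' (g (s t)))).comp (s t)
    (hg (s t)).hasDerivAt).comp_hasDerivWithinAt t hs
  exact (hG.add ((hasDerivWithinAt_id t S).mul hΦ)).congr_deriv
    (by simp only [Function.comp_apply, one_mul, id_eq]; ring)

theorem hasDerivWithinAt_areaPotential_of_derivWithin_eq {σ : ℝ} (hF : Differentiable ℝ F)
    (hF' : Differentiable ℝ (deriv F)) (hg : Differentiable ℝ g)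
    (hs : DifferentiableWithinAt ℝ s S t) (hS : UniqueDiffWithinAt ℝ S t)
    (hσ : derivWithin (fun τ => s τ + deriv F (g (s τ)) * τ) S t = σ) :
    HasDerivWithinAt (fun τ => areaPotential F g τ (s τ)) (g (s t) * σ - F (g (s t))) S t := by
  rw [← hσ, (hasDerivWithinAt_characteristic hF' hg hs.hasDerivWithinAt).derivWithin hS]
  exact hasDerivWithinAt_areaPotential_comp hF hF' hg hs.hasDerivWithinAt

end

theorem rankine_hugoniot_implies_area_constant_general
    (F g : ℝ → ℝ) (hF : ContDiff ℝ 2 F) (hg : ContDiff ℝ 1 g)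
    (x : ℝ → ℝ → ℝ) (hx : ∀ s t, x s t = s + deriv F (g s) * t)
    (tstar T : ℝ)
    (s₁ s₂ : ℝ → ℝ)
    (hs₁ : DifferentiableOn ℝ s₁ (Set.Icc tstar T))
    (hs₂ : DifferentiableOn ℝ s₂ (Set.Icc tstar T))
    (hRH1 : ∀ t ∈ Set.Icc tstar T,
      derivWithin (fun τ => x (s₁ τ) τ) (Set.Icc tstar T) t =
        (F (g (s₁ t)) - F (g (s₂ t))) / (g (s₁ t) - g (s₂ t)))
    (hRH2 : ∀ t ∈ Set.Icc tstar T,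
      derivWithin (fun τ => x (s₂ τ) τ) (Set.Icc tstar T) t =
        (F (g (s₁ t)) - F (g (s₂ t))) / (g (s₁ t) - g (s₂ t))) :
    ∀ t₁ ∈ Set.Icc tstar T, ∀ t₂ ∈ Set.Icc tstar T,
      (∫ s in s₁ t₁..s₂ t₁, g s * (1 + deriv (deriv F) (g s) * deriv g s * t₁)) =
      (∫ s in s₁ t₂..s₂ t₂, g s * (1 + deriv (deriv F) (g s) * deriv g s * t₂)) := by
  intro t₁ ht₁ t₂ ht₂
  rcases le_or_gt T tstar with hle | hlt
  · rw [Set.subsingleton_Icc_of_ge hle ht₁ ht₂]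
  have hUD := uniqueDiffOn_Icc hlt
  have hFd := hF.differentiable two_ne_zero
  have hF'd := hF.deriv'.differentiable one_ne_zero
  have hgd := hg.differentiable one_ne_zero
  have hchar : ∀ s : ℝ → ℝ, (fun τ => x (s τ) τ) = fun τ => s τ + deriv F (g (s τ)) * τ :=
    fun s => funext fun τ => hx _ _
  have hA : ∀ t ∈ Icc tstar T, HasDerivWithinAt
      (fun τ => areaPotential F g τ (s₂ τ) - areaPotential F g τ (s₁ τ)) 0 (Icc tstar T) t := by
    intro t ht
    have h₁ := hasDerivWithinAt_areaPotential_of_derivWithin_eq hFd hF'd hgd (hs₁ t ht) (hUD t ht)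
      (hchar s₁ ▸ hRH1 t ht)
    have h₂ := hasDerivWithinAt_areaPotential_of_derivWithin_eq hFd hF'd hgd (hs₂ t ht) (hUD t ht)
      (hchar s₂ ▸ hRH2 t ht)
    exact (h₂.sub h₁).congr_deriv (by rw [mul_slope_sub_eq_mul_slope_sub F, sub_self])
  have hconst := constant_of_derivWithin_zero (fun t ht => (hA t ht).differentiableWithinAt)
    fun t ht => (hA t (Ico_subset_Icc_self ht)).derivWithin (hUD t (Ico_subset_Icc_self ht))
  rw [integral_eq_areaPotential_sub hF hg, integral_eq_areaPotential_sub hF hg]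
  exact (hconst t₁ ht₁).trans (hconst t₂ ht₂).symm

/-- Converse direction of the equal-area principle: under the Rankine–Hugoniot condition,
the signed parametric area `A(t) = ∫_{s₁(t)}^{s₂(t)} u(s) x_s(s,t) ds` is constant. -/
theorem rankine_hugoniot_implies_area_constant
    (F g : ℝ → ℝ) (hF : ContDiff ℝ 2 F) (hg : ContDiff ℝ 1 g)
    (x : ℝ → ℝ → ℝ) (hx : ∀ s t, x s t = s + deriv F (g s) * t)
    (tstar T : ℝ) (htT : tstar ≤ T)
    (s₁ s₂ : ℝ → ℝ)
    (hs₁ : DifferentiableOn ℝ s₁ (Set.Icc tstar T))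
    (hs₂ : DifferentiableOn ℝ s₂ (Set.Icc tstar T))
    (hjoin : ∀ t ∈ Set.Icc tstar T, x (s₁ t) t = x (s₂ t) t)
    (hne : ∀ t ∈ Set.Icc tstar T, g (s₁ t) ≠ g (s₂ t))
    (hRH1 : ∀ t ∈ Set.Icc tstar T,
      derivWithin (fun τ => x (s₁ τ) τ) (Set.Icc tstar T) t =
        (F (g (s₁ t)) - F (g (s₂ t))) / (g (s₁ t) - g (s₂ t)))
    (hRH2 : ∀ t ∈ Set.Icc tstar T,
      derivWithin (fun τ => x (s₂ τ) τ) (Set.Icc tstar T) t =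
        (F (g (s₁ t)) - F (g (s₂ t))) / (g (s₁ t) - g (s₂ t))) :
    ∀ t₁ ∈ Set.Icc tstar T, ∀ t₂ ∈ Set.Icc tstar T,
      (∫ s in s₁ t₁..s₂ t₁, g s * (1 + deriv (deriv F) (g s) * deriv g s * t₁)) =
      (∫ s in s₁ t₂..s₂ t₂, g s * (1 + deriv (deriv F) (g s) * deriv g s * t₂)) :=
  rankine_hugoniot_implies_area_constant_general F g hF hg x hx tstar T s₁ s₂ hs₁ hs₂ hRH1 hRH2
end

section
/- The functions x(t) = 2·arctan(tan(√5·t/4)/√5) and u(t) = 3/2 - cos(x(t)) satisfy the system ẋ = u, u̇ = sin(x)·u with x(0) = 0 and u(0) = 1/2, for t in a neighborhood of 0 where tan(√5·t/4) is defined. -/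
open Real

/-- The explicit functions `x(t) = 2 arctan(tan(√5 t/4)/√5)` and `u(t) = 3/2 - cos(x(t))`
solve the characteristic system `ẋ = u`, `u̇ = sin(x) u` with `x(0) = 0`, `u(0) = 1/2`,
on the interval where `tan(√5 t/4)` is defined. -/
theorem characteristic_solution_explicit
    (x u : ℝ → ℝ)
    (hx : ∀ t, x t = 2 * Real.arctan (Real.tan (Real.sqrt 5 / 4 * t) / Real.sqrt 5))
    (hu : ∀ t, u t = 3 / 2 - Real.cos (x t)) :
    (∀ t ∈ Set.Ioo (-(2 * π / Real.sqrt 5)) (2 * π / Real.sqrt 5),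
      HasDerivAt x (u t) t ∧ HasDerivAt u (Real.sin (x t) * u t) t) ∧
    x 0 = 0 ∧ u 0 = 1 / 2 := by
  have hs : (0:ℝ) < Real.sqrt 5 := Real.sqrt_pos.mpr (by norm_num)
  have hs2 : Real.sqrt 5 ^ 2 = 5 := Real.sq_sqrt (by norm_num)
  have hxf : x = fun t => 2 * Real.arctan (Real.tan (Real.sqrt 5 / 4 * t) / Real.sqrt 5) :=
    funext hx
  have huf : u = fun t => 3 / 2 - Real.cos (x t) := funext hu
  refine ⟨fun t ht => ?_, ?_, ?_⟩
  · set s := Real.sqrt 5 with hsdef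
    set τ := s / 4 * t with hτdef
    have hl : -(2*π) < t * s := (div_lt_iff₀ hs).mp (by rw [neg_div]; exact ht.1)
    have hr : t * s < 2*π := (lt_div_iff₀ hs).mp ht.2
    have hτmem : τ ∈ Set.Ioo (-(π/2)) (π/2) := by
      constructor
      · rw [hτdef]; nlinarith
      · rw [hτdef]; nlinarith
    have hcos : Real.cos τ ≠ 0 :=
      (Real.cos_pos_of_mem_Ioo hτmem).ne'
    set T := Real.tan τ with hTdef
    have htansq : 1 / Real.cos τ ^ 2 = 1 + T ^ 2 := by
      rw [← Real.inv_one_add_tan_sq hcos, one_div, inv_inv]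
    -- derivative of x
    have h1 : HasDerivAt (fun t : ℝ => s / 4 * t) (s / 4) t := by
      simpa using (hasDerivAt_id t).const_mul (s / 4)
    have h2 : HasDerivAt Real.tan (1 / Real.cos τ ^ 2) τ := Real.hasDerivAt_tan hcos
    have h3 := (h2.comp t h1).div_const s
    have h5 : HasDerivAt Real.arctan (1 / (1 + (T / s) ^ 2)) (T / s) :=
      Real.hasDerivAt_arctan _
    have h6 := (h5.comp t h3).const_mul 2
    have hcosx : Real.cos (x t) = 2 * (1 / (1 + (T / s) ^ 2)) - 1 := by
      rw [hx t, Real.cos_two_mul, Real.cos_arctan]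
      have h1T : (0:ℝ) ≤ 1 + (T / s) ^ 2 := by positivity
      rw [div_pow, one_pow, Real.sq_sqrt h1T]
    have hd : HasDerivAt x
        (2 * (1 / (1 + (T / s) ^ 2) * (1 / Real.cos τ ^ 2 * (s / 4) / s))) t := by
      rw [hxf]; exact h6
    have hval : 2 * (1 / (1 + (T / s) ^ 2) * (1 / Real.cos τ ^ 2 * (s / 4) / s)) = u t := by
      rw [hu t, hcosx, htansq]
      have h1T : (0:ℝ) < 1 + T ^ 2 / 5 := by positivity
      rw [div_pow, hs2]
      field_simp
      ring
    have hdx : HasDerivAt x (u t) t := hval ▸ hd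
    refine ⟨hdx, ?_⟩
    have hcomp : HasDerivAt (fun t => (3:ℝ)/2 - Real.cos (x t))
        (Real.sin (x t) * (3/2 - Real.cos (x t))) t := by
      have h := ((Real.hasDerivAt_cos (x t)).comp t hdx).const_sub (3/2)
      rw [hu t] at h
      simpa using h
    rw [hu t, huf]
    exact hcomp
  · rw [hx 0]; simp
  · rw [hu 0, hx 0]; simp; norm_num
end

section
/- If x(t) satisfies ẋ = 3/2 - cos(x) with x(0) = 0, then x(t) = 2·arctan(tan(√5·t/4)/√5) for t ∈ (-2π/√5, 2π/√5). -/
/-!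
The half-angle substitution `u = tan (x / 2)` turns `ẋ = a - cos x` into the Riccati equation
`2 u̇ = (a - 1) + (a + 1) u²`, which `u = c tan (k t)` solves as soon as `2 c k = a - 1` and
`2 k = (a + 1) c`; for `a = 3/2` take `c = 1/√5`, `k = √5/4`. This candidate is differentiable
while `|k t| < π/2`, and since `u ↦ a - cos u` is `1`-Lipschitz, uniqueness of solutions of the
initial value problem identifies `x` with it on that interval.
-/

open Real Set

theorem Real.cos_two_mul_arctan (u : ℝ) : cos (2 * arctan u) = (1 - u ^ 2) / (1 + u ^ 2) := by
  rw [cos_two_mul, cos_sq_arctan]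
  field_simp
  ring

theorem Real.hasDerivAt_const_mul_tan_mul {c k t : ℝ} (h : cos (k * t) ≠ 0) :
    HasDerivAt (fun t => c * tan (k * t)) (c * k * (1 + tan (k * t) ^ 2)) t := by
  refine (((hasDerivAt_tan h).comp t ((hasDerivAt_id t).const_mul k)).const_mul c).congr_deriv ?_
  rw [one_div, ← inv_one_add_tan_sq h, inv_inv, mul_one]
  ring

theorem Real.lipschitzWith_const_sub_cos (a : ℝ) : LipschitzWith 1 (fun u => a - cos u) :=
  LipschitzWith.of_dist_le_mul fun x y => by
    simpa only [dist_sub_left, NNReal.coe_one, one_mul] using lipschitzWith_cos.dist_le_mul x y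

theorem hasDerivAt_two_mul_arctan_mul_tan {a c k t : ℝ} (hck : 2 * c * k = a - 1)
    (hk : 2 * k = (a + 1) * c) (h : cos (k * t) ≠ 0) :
    HasDerivAt (fun t => 2 * arctan (c * tan (k * t)))
      (a - cos (2 * arctan (c * tan (k * t)))) t := by
  refine ((hasDerivAt_const_mul_tan_mul h).arctan.const_mul 2).congr_deriv ?_
  rw [cos_two_mul_arctan]
  field_simp
  linear_combination hck + c * tan (k * t) ^ 2 * hk

/-- If `x` satisfies `ẋ = 3/2 - cos x` with `x 0 = 0`, then
`x(t) = 2 arctan(tan(√5 t/4)/√5)` for `t ∈ (-2π/√5, 2π/√5)`. -/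
theorem autonomous_ode_solution
    (x : ℝ → ℝ)
    (hx : ∀ t, HasDerivAt x (3 / 2 - Real.cos (x t)) t)
    (hx0 : x 0 = 0) :
    ∀ t ∈ Set.Ioo (-(2 * π / Real.sqrt 5)) (2 * π / Real.sqrt 5),
      x t = 2 * Real.arctan (Real.tan (Real.sqrt 5 / 4 * t) / Real.sqrt 5) := by
  have h5 : 0 < √5 := by positivity
  have hcos : ∀ t ∈ Ioo (-(2 * π / √5)) (2 * π / √5), cos (√5 / 4 * t) ≠ 0 := by
    rintro t ⟨hlo, hhi⟩
    rw [← neg_div, div_lt_iff₀ h5] at hlo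
    rw [lt_div_iff₀ h5] at hhi
    exact (cos_pos_of_mem_Ioo ⟨by linarith, by linarith⟩).ne'
  have hsol : ∀ t ∈ Ioo (-(2 * π / √5)) (2 * π / √5),
      HasDerivAt (fun t => 2 * arctan (tan (√5 / 4 * t) / √5))
        (3 / 2 - cos (2 * arctan (tan (√5 / 4 * t) / √5))) t := fun t ht => by
    simpa only [div_eq_inv_mul _ √5] using
      hasDerivAt_two_mul_arctan_mul_tan (a := 3 / 2) (by field_simp; norm_num)
        (by field_simp; norm_num) (hcos t ht)
  have h0 : (0 : ℝ) ∈ Ioo (-(2 * π / √5)) (2 * π / √5) := by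
    constructor <;> simp [pi_pos, h5]
  exact ODE_solution_unique_of_mem_Ioo (v := fun _ u => 3 / 2 - cos u) (s := fun _ => univ)
    (fun _ _ => (lipschitzWith_const_sub_cos _).lipschitzOnWith) h0
    (fun t _ => ⟨hx t, mem_univ _⟩) (fun t ht => ⟨hsol t ht, mem_univ _⟩) (by simp [hx0])
end
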